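/- Let a be a vertex of a graph G. Then, as a polynomial identity, (1−x−y) · Σ_{W : a ∈ W} x^{|W|} y^{|N_G(W)|} = x · ( (1−y) J(G∖a) + y J(G−a) + (1−y) y^{|N(a)|} J(G − N[a]) − J(G) ). -/

import Mathlib

open Finset
open scoped Classical

/-- External neighbourhood N(W) = N[W] \ W of a vertex subset. -/
noncomputable def extN {V : Type} [Fintype V] (G : SimpleGraph V) (W : Finset V) : Finset V :=
  Finset.univ.filter (fun v => v ∉ W ∧ ∃ w ∈ W, G.Adj v w)

/-- The bivariate domination polynomial J(G;x,y) = ∑_{W ⊆ V} x^|W| y^|N(W)|. -/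
noncomputable def JP {V : Type} [Fintype V] (G : SimpleGraph V) (x y : ℝ) : ℝ :=
  ∑ W : Finset V, x ^ W.card * y ^ (extN G W).card

/-- Vertex deletion G − a. -/
noncomputable def Gdel {V : Type} (G : SimpleGraph V) (a : V) : SimpleGraph {v : V // v ≠ a} :=
  G.induce {v : V | v ≠ a}

/-- Deletion of a set of vertices. -/
noncomputable def GdelSet {V : Type} (G : SimpleGraph V) (S : Set V) : SimpleGraph {v : V // v ∉ S} :=
  G.induce {v : V | v ∉ S}

/-- Vertex contraction G∖a: join all neighbours of a, then delete a. -/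
noncomputable def Gcon {V : Type} (G : SimpleGraph V) (a : V) : SimpleGraph {v : V // v ≠ a} where
  Adj u v := u ≠ v ∧ (G.Adj u.val v.val ∨ (G.Adj u.val a ∧ G.Adj a v.val))
  symm := ⟨fun _ _ ⟨h1, h2⟩ =>
    ⟨fun e => h1 e.symm, h2.imp G.adj_symm (fun ⟨p, q⟩ => ⟨G.adj_symm q, G.adj_symm p⟩)⟩⟩
  loopless := ⟨fun _ h => h.1 rfl⟩

/-!
Write each `W ∋ a` as `insert a W` with `a ∉ W`; every polynomial in the identity is then a sum
over such `W`, and the identity holds summand by summand. If `W` meets `N(a)`, then `a ∈ N(W)`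
and the neighbourhood of `W` in `G∖a` is `N(W ∪ {a})`, while `W` is not a vertex set of
`G − N[a]`. Otherwise `a ∉ N(W)`, the neighbourhoods of `W` in `G∖a`, `G − a` and `G` agree, and
`N(W ∪ {a})` is the disjoint union of `N(a)` and `N(W) ∖ N[a]`.
-/
lemma Gcon_adj {V : Type} {G : SimpleGraph V} {a : V} {u v : {v // v ≠ a}} :
    (Gcon G a).Adj u v ↔ u ≠ v ∧ (G.Adj u v ∨ G.Adj u a ∧ G.Adj a v) :=
  Iff.rfl

lemma coe_subset_setOf_ne {V : Type} {W : Finset V} {a : V} : ↑W ⊆ {v | v ≠ a} ↔ a ∉ W := by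
  simp [Set.subset_def]

lemma mem_map_subtype {V : Type} {p : V → Prop} {W : Finset (Subtype p)} {v : V} :
    v ∈ W.map (.subtype p) ↔ ∃ h : p v, ⟨v, h⟩ ∈ W := by
  simp

section

variable {V : Type} [Fintype V]

lemma mem_extN {G : SimpleGraph V} {W : Finset V} {v : V} :
    v ∈ extN G W ↔ v ∉ W ∧ ∃ w ∈ W, G.Adj v w := by
  simp [extN]

lemma sum_filter_mem_eq_sum_insert {M : Type*} [AddCommMonoid M] (a : V) (f : Finset V → M) :
    ∑ W with a ∈ W, f W = ∑ W with a ∉ W, f (insert a W) := by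
  refine sum_nbij' (fun W => W.erase a) (insert a) ?_ ?_ ?_ ?_ ?_ <;>
    simp +contextual

lemma sum_finset_subtype_map {M : Type*} [AddCommMonoid M] (s : Set V) [Fintype s]
    (f : Finset V → M) :
    ∑ W : Finset s, f (W.map (.subtype _)) = ∑ W with ↑W ⊆ s, f W := by
  refine sum_nbij' (fun W => W.map (.subtype _)) (fun W => W.subtype (· ∈ s)) ?_ ?_ ?_ ?_ ?_
  · simp
  · simp
  · intro W _
    ext v
    simp
  · intro W hW
    rw [subtype_map, filter_true_of_mem (by simpa [Set.subset_def] using hW)]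
  · simp

lemma JP_eq_sum_subset (s : Set V) [Fintype s] (H : SimpleGraph s) (g : Finset V → ℕ)
    (hg : ∀ W : Finset s, #(extN H W) = g (W.map (.subtype _))) (x y : ℝ) :
    JP H x y = ∑ W with ↑W ⊆ s, x ^ #W * y ^ g W := by
  rw [JP, ← sum_finset_subtype_map s (fun W => x ^ #W * y ^ g W)]
  exact sum_congr rfl fun W _ => by rw [card_map, hg]

lemma extN_induce_map (G : SimpleGraph V) (s : Set V) [Fintype s] (W : Finset s) :
    (extN (G.induce s) W).map (.subtype _) = {v ∈ extN G (W.map (.subtype _)) | v ∈ s} := by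
  ext v
  simp only [mem_map_subtype, mem_filter, mem_extN, SimpleGraph.induce_adj]
  grind

lemma JP_induce (G : SimpleGraph V) (s : Set V) [Fintype s] (x y : ℝ) :
    JP (G.induce s) x y = ∑ W with ↑W ⊆ s, x ^ #W * y ^ #{v ∈ extN G W | v ∈ s} :=
  JP_eq_sum_subset s _ _ (fun W => by rw [← extN_induce_map, card_map]) x y

lemma JP_eq_sum_not_mem (G : SimpleGraph V) (a : V) (x y : ℝ) :
    JP G x y = ∑ W with a ∉ W, (x ^ #(insert a W) * y ^ #(extN G (insert a W)) +
      x ^ #W * y ^ #(extN G W)) := by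
  rw [JP, ← sum_filter_add_sum_filter_not univ (a ∈ ·), sum_filter_mem_eq_sum_insert,
    sum_add_distrib]

lemma JP_Gdel (G : SimpleGraph V) (a : V) (x y : ℝ) :
    JP (Gdel G a) x y = ∑ W with a ∉ W, x ^ #W * y ^ #((extN G W).erase a) := by
  refine (JP_induce G {v | v ≠ a} x y).trans ?_
  simp only [coe_subset_setOf_ne, Set.mem_ofPred_eq, filter_ne']

lemma extN_Gcon_map (G : SimpleGraph V) (a : V) (W : Finset {v // v ≠ a}) :
    (extN (Gcon G a) W).map (.subtype _) =
      if ∃ w ∈ W.map (.subtype _), G.Adj a w then extN G (insert a (W.map (.subtype _)))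
      else (extN G (W.map (.subtype _))).erase a := by
  split_ifs with h
  · ext v
    simp only [mem_map_subtype, mem_extN, mem_insert, Gcon_adj] at h ⊢
    grind
  · ext v
    simp only [mem_map_subtype, mem_extN, mem_erase, Gcon_adj] at h ⊢
    grind

lemma JP_Gcon (G : SimpleGraph V) (a : V) (x y : ℝ) :
    JP (Gcon G a) x y = ∑ W with a ∉ W, x ^ #W * y ^
      (if ∃ w ∈ W, G.Adj a w then #(extN G (insert a W)) else #((extN G W).erase a)) := by
  refine (JP_eq_sum_subset {v | v ≠ a} (Gcon G a) (fun W => if ∃ w ∈ W, G.Adj a w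
    then #(extN G (insert a W)) else #((extN G W).erase a)) (fun W => ?_) x y).trans ?_
  · rw [← card_map, extN_Gcon_map, apply_ite card]
    -- the embeddings of `{v // v ≠ a}` and of `↥{v | v ≠ a}` into `V` agree only up to defeq
    rfl
  · simp only [coe_subset_setOf_ne]

lemma card_extN_insert_of_forall_not_adj (G : SimpleGraph V) {a : V} {W : Finset V}
    (hW : ∀ w ∈ W, ¬G.Adj a w) :
    #(extN G (insert a W)) =
      #{v ∈ extN G W | v ∉ {v | v = a ∨ G.Adj a v}} + #{v | G.Adj a v} := by
  rw [← card_union_of_disjoint]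
  · congr 1
    ext v
    simp only [mem_extN, mem_union, mem_filter, mem_insert, Set.mem_ofPred_eq, mem_univ, true_and]
    grind [SimpleGraph.adj_symm, SimpleGraph.Adj.ne]
  · simp +contextual [disjoint_left]

lemma JP_GdelSet_closedNbhd (G : SimpleGraph V) (a : V) (x y : ℝ) :
    JP (GdelSet G {v | v = a ∨ G.Adj a v}) x y = ∑ W with a ∉ W,
      if ∀ w ∈ W, ¬G.Adj a w then
        x ^ #W * y ^ #{v ∈ extN G W | v ∉ {v | v = a ∨ G.Adj a v}}
      else 0 := by
  refine (JP_induce G {v | v ∉ ({v | v = a ∨ G.Adj a v} : Set V)} x y).trans ?_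
  rw [← sum_filter, filter_filter]
  refine sum_congr (filter_congr fun W _ => ?_) fun _ _ => ?_
  · simp [Set.subset_def, forall_and]
  · simp only [Set.mem_ofPred_eq]

lemma J_cond_mem_summand (G : SimpleGraph V) {a : V} {W : Finset V} (ha : a ∉ W) (x y : ℝ) :
    (1 - x - y) * (x ^ #(insert a W) * y ^ #(extN G (insert a W))) =
      x * ((1 - y) * (x ^ #W * y ^ (if ∃ w ∈ W, G.Adj a w then #(extN G (insert a W))
                                      else #((extN G W).erase a)))
        + y * (x ^ #W * y ^ #((extN G W).erase a))
        + (1 - y) * y ^ #{v | G.Adj a v} * (if ∀ w ∈ W, ¬G.Adj a w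
            then x ^ #W * y ^ #{v ∈ extN G W | v ∉ {v | v = a ∨ G.Adj a v}} else 0)
        - (x ^ #(insert a W) * y ^ #(extN G (insert a W)) + x ^ #W * y ^ #(extN G W))) := by
  rw [card_insert_of_notMem ha]
  by_cases hadj : ∃ w ∈ W, G.Adj a w
  · have hnot : ¬∀ w ∈ W, ¬G.Adj a w := fun h => hadj.elim fun w ⟨hw, haw⟩ => h w hw haw
    rw [if_pos hadj, if_neg hnot, ← card_erase_add_one (mem_extN.2 ⟨ha, hadj⟩)]
    ring
  · have hnot : ∀ w ∈ W, ¬G.Adj a w := fun w hw haw => hadj ⟨w, hw, haw⟩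
    rw [if_neg hadj, if_pos hnot, erase_eq_of_notMem fun h => hadj (mem_extN.1 h).2,
      card_extN_insert_of_forall_not_adj G hnot]
    ring

end

theorem J_cond_mem {V : Type} [Fintype V] (G : SimpleGraph V) (a : V) (x y : ℝ) :
    (1 - x - y) * ∑ W ∈ Finset.univ.filter (fun W : Finset V => a ∈ W),
      x ^ W.card * y ^ (extN G W).card
      = x * ((1 - y) * JP (Gcon G a) x y + y * JP (Gdel G a) x y
          + (1 - y) * y ^ (Finset.univ.filter (fun v => G.Adj a v)).card *
              JP (GdelSet G {v : V | v = a ∨ G.Adj a v}) x y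
          - JP G x y) := by
  rw [sum_filter_mem_eq_sum_insert, JP_Gcon, JP_Gdel, JP_GdelSet_closedNbhd, JP_eq_sum_not_mem G a]
  simp only [mul_sum, ← sum_add_distrib, ← sum_sub_distrib]
  exact sum_congr rfl fun W hW => J_cond_mem_summand G (mem_filter.1 hW).2 x y
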